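/- arXiv:math/0310063 — 4 statements merged into one kernel-verified Lean document; each statement's English description precedes it below -/
import Mathlib

section
/- Let m, n be natural numbers with m − n even and m − n > 0, and let α be an even natural number with α ≤ m + n − 2. Then ∫∫_{0≤y≤x≤1} (x−y)^α p_m(x) p_n(y) dy dx = 0. -/
open MeasureTheory intervalIntegral

/-- Shifted Legendre polynomial `p n x = (1/n!) dⁿ/dxⁿ (xⁿ(x-1)ⁿ)`. -/
noncomputable def shiftedLegendre (n : ℕ) : ℝ → ℝ :=
  fun x => (1 / (Nat.factorial n) : ℝ) * iteratedDeriv n (fun t : ℝ => t ^ n * (t - 1) ^ n) x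

/-- Pochhammer symbol `(a)_k = a(a+1)⋯(a+k-1)`. -/
noncomputable def poch (a : ℝ) (k : ℕ) : ℝ := ∏ i ∈ Finset.range k, (a + i)

/-!
The point reflection `(x, y) ↦ (1 - x, 1 - y)` maps the triangle `y ≤ x` onto the triangle
`x ≤ y`, and it fixes the integrand because `a` and `m + n` are even and
`p_k (1 - x) = (-1)^k p_k x`. Hence the integral over the triangle is half the integral over the
square. Over the square, expanding `(x - y)^a` turns the integral into a sum of products
`(∫ x^k p_m) (∫ y^(a-k) p_n)`, and each product vanishes since `k < m` or `a - k < n`: by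
Rodrigues' formula and repeated integration by parts, `p_k` is orthogonal to all polynomials of
degree `< k`.
-/

open Polynomial hiding shiftedLegendre

namespace Polynomial

theorem iteratedDeriv_eval {𝕜 : Type*} [NontriviallyNormedField 𝕜] (p : 𝕜[X]) (k : ℕ) :
    iteratedDeriv k (fun x => p.eval x) = fun x => (derivative^[k] p).eval x := by
  induction k generalizing p with
  | zero => simp
  | succ k ih =>
    have hderiv : deriv (fun x => p.eval x) = fun x => (derivative p).eval x :=
      _root_.funext fun _ => p.deriv
    rw [iteratedDeriv_succ', hderiv, ih, Function.iterate_succ_apply]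

theorem isRoot_iterate_derivative_of_pow_dvd {R : Type*} [CommRing R] {p : R[X]} {t : R}
    {n k : ℕ} (h : (X - C t) ^ n ∣ p) (hk : k < n) : (derivative^[k] p).IsRoot t :=
  dvd_iff_isRoot.mp <| (dvd_pow_self _ (Nat.sub_ne_zero_of_lt hk)).trans
    (pow_sub_dvd_iterate_derivative_of_pow_dvd k h)

theorem integral_eval_mul_eval_derivative {u v : ℝ[X]} {a b : ℝ} (ha : v.IsRoot a)
    (hb : v.IsRoot b) :
    ∫ x in a..b, u.eval x * (derivative v).eval x
      = -∫ x in a..b, (derivative u).eval x * v.eval x := by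
  rw [intervalIntegral.integral_mul_deriv_eq_deriv_mul (fun x _ => u.hasDerivAt x)
    (fun x _ => v.hasDerivAt x) ((derivative u).continuous.intervalIntegrable a b)
    ((derivative v).continuous.intervalIntegrable a b), ha.eq_zero, hb.eq_zero]
  simp

theorem integral_eval_mul_eval_iterate_derivative {u v : ℝ[X]} {a b : ℝ} {k : ℕ}
    (hv : ∀ i < k, (derivative^[i] v).IsRoot a ∧ (derivative^[i] v).IsRoot b) :
    ∫ x in a..b, u.eval x * (derivative^[k] v).eval x
      = (-1) ^ k * ∫ x in a..b, (derivative^[k] u).eval x * v.eval x := by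
  induction k generalizing v with
  | zero => simp
  | succ k ih =>
    obtain ⟨ha, hb⟩ : v.IsRoot a ∧ v.IsRoot b := hv 0 k.succ_pos
    rw [Function.iterate_succ_apply, ih fun i hi => hv (i + 1) (by omega),
      Function.iterate_succ_apply', integral_eval_mul_eval_derivative ha hb, pow_succ]
    ring

theorem integral_eval_mul_eval_iterate_derivative_eq_zero {u v : ℝ[X]} {a b : ℝ} {k : ℕ}
    (hv : ∀ i < k, (derivative^[i] v).IsRoot a ∧ (derivative^[i] v).IsRoot b)
    (hu : u.natDegree < k) :
    ∫ x in a..b, u.eval x * (derivative^[k] v).eval x = 0 := by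
  simp [integral_eval_mul_eval_iterate_derivative hv, iterate_derivative_eq_zero hu]

end Polynomial

theorem shiftedLegendre_eq_eval (n : ℕ) :
    shiftedLegendre n = fun x =>
      (1 / n.factorial : ℝ) * (derivative^[n] (X ^ n * (X - 1) ^ n : ℝ[X])).eval x := by
  have hrodrigues : (fun t : ℝ => t ^ n * (t - 1) ^ n)
      = fun t => (X ^ n * (X - 1) ^ n : ℝ[X]).eval t := by
    simp
  unfold shiftedLegendre
  rw [hrodrigues, iteratedDeriv_eval]

@[fun_prop]
theorem continuous_shiftedLegendre (n : ℕ) : Continuous (shiftedLegendre n) := by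
  rw [shiftedLegendre_eq_eval]
  fun_prop

theorem shiftedLegendre_one_sub (n : ℕ) (x : ℝ) :
    shiftedLegendre n (1 - x) = (-1) ^ n * shiftedLegendre n x := by
  have hcomp : (X ^ n * (X - 1) ^ n : ℝ[X]).comp (1 - X) = X ^ n * (X - 1) ^ n := by
    simp only [mul_comp, pow_comp, X_comp, sub_comp, one_comp, ← mul_pow]
    ring
  have hsymm := congr_arg (eval (1 - x))
    (iterate_derivative_comp_one_sub_X (X ^ n * (X - 1) ^ n : ℝ[X]) n)
  rw [hcomp] at hsymm
  simp only [eval_mul, eval_comp, eval_pow, eval_neg, eval_one, eval_sub, eval_X,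
    sub_sub_cancel] at hsymm
  simp only [shiftedLegendre_eq_eval, hsymm]
  ring

theorem integral_pow_mul_shiftedLegendre_eq_zero {n j : ℕ} (hj : j < n) :
    ∫ x in (0 : ℝ)..1, x ^ j * shiftedLegendre n x = 0 := by
  have hboundary : ∀ i < n, (derivative^[i] (X ^ n * (X - 1) ^ n : ℝ[X])).IsRoot 0 ∧
      (derivative^[i] (X ^ n * (X - 1) ^ n : ℝ[X])).IsRoot 1 := fun i hi =>
    ⟨isRoot_iterate_derivative_of_pow_dvd (dvd_mul_of_dvd_left (by simp) _) hi,
      isRoot_iterate_derivative_of_pow_dvd (dvd_mul_of_dvd_right (by simp) _) hi⟩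
  have horth := integral_eval_mul_eval_iterate_derivative_eq_zero hboundary
    (u := X ^ j) (by simpa using hj)
  simp only [eval_pow, eval_X] at horth
  simp only [shiftedLegendre_eq_eval, mul_left_comm _ (1 / _ : ℝ),
    intervalIntegral.integral_const_mul, horth, mul_zero]

theorem integral_integral_sub_pow_mul_mul_eq_zero {f g : ℝ → ℝ} (hf : Continuous f)
    (hg : Continuous g) {a b : ℝ} {m n d : ℕ}
    (hfm : ∀ j < m, ∫ x in a..b, x ^ j * f x = 0)
    (hgn : ∀ j < n, ∫ y in a..b, y ^ j * g y = 0)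
    (hd : d < m + n) :
    ∫ x in a..b, ∫ y in a..b, (x - y) ^ d * f x * g y = 0 := by
  have hexpand : ∀ x y, (x - y) ^ d * f x * g y = ∑ k ∈ Finset.range (d + 1),
      (-1) ^ (k + d) * d.choose k * (x ^ k * f x) * (y ^ (d - k) * g y) := by
    intro x y
    rw [sub_pow, Finset.sum_mul, Finset.sum_mul]
    exact Finset.sum_congr rfl fun _ _ => by ring
  have hmoments : ∀ k ∈ Finset.range (d + 1),
      (∫ x in a..b, x ^ k * f x) * ∫ y in a..b, y ^ (d - k) * g y = 0 := by
    intro k hk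
    rcases lt_or_ge k m with hkm | hkm
    · rw [hfm k hkm, zero_mul]
    · rw [hgn (d - k) (by grind), mul_zero]
  calc ∫ x in a..b, ∫ y in a..b, (x - y) ^ d * f x * g y
      = ∫ x in a..b, ∑ k ∈ Finset.range (d + 1), (-1) ^ (k + d) * d.choose k * (x ^ k * f x) *
          ∫ y in a..b, y ^ (d - k) * g y := by
        simp_rw [hexpand]
        congr with x
        rw [intervalIntegral.integral_finsetSum fun k _ =>
          (by fun_prop : Continuous _).intervalIntegrable _ _]
        simp_rw [intervalIntegral.integral_const_mul]
    _ = ∑ k ∈ Finset.range (d + 1), (-1) ^ (k + d) * d.choose k *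
          ((∫ x in a..b, x ^ k * f x) * ∫ y in a..b, y ^ (d - k) * g y) := by
        rw [intervalIntegral.integral_finsetSum fun k _ =>
          (by fun_prop : Continuous _).intervalIntegrable _ _]
        simp_rw [intervalIntegral.integral_mul_const, intervalIntegral.integral_const_mul,
          mul_assoc]
    _ = 0 := Finset.sum_eq_zero fun k hk => by rw [hmoments k hk, mul_zero]

theorem two_mul_integral_triangle_eq_integral_square {F : ℝ → ℝ → ℝ}
    (hF : Continuous (Function.uncurry F)) {a b : ℝ}
    (hreflect : ∀ x y, F (a + b - x) (a + b - y) = F x y) :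
    2 * (∫ x in a..b, ∫ y in a..x, F x y) = ∫ x in a..b, ∫ y in a..b, F x y := by
  set T : ℝ → ℝ := fun x => ∫ y in a..x, F x y
  have hT : Continuous T := continuous_parametric_intervalIntegral_of_continuous hF continuous_id
  have hsplit : ∀ x, ∫ y in a..b, F x y = T x + T (a + b - x) := by
    intro x
    have hFx : Continuous (F x) := hF.comp (Continuous.prodMk_right x)
    have hmirror : T (a + b - x) = ∫ y in x..b, F x y := by
      simp only [T, ← hreflect x]
      rw [intervalIntegral.integral_comp_sub_left (fun y => F (a + b - x) y)]
      simp
    rw [hmirror, intervalIntegral.integral_add_adjacent_intervals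
      (hFx.intervalIntegrable a x) (hFx.intervalIntegrable x b)]
  have hTreflect : ∫ x in a..b, T (a + b - x) = ∫ x in a..b, T x := by
    rw [intervalIntegral.integral_comp_sub_left T]
    simp
  calc 2 * (∫ x in a..b, T x) = (∫ x in a..b, T x) + ∫ x in a..b, T (a + b - x) := by
        rw [hTreflect, two_mul]
    _ = ∫ x in a..b, ∫ y in a..b, F x y := by
        rw [← intervalIntegral.integral_add (hT.intervalIntegrable a b)
          ((by fun_prop : Continuous fun x => T (a + b - x)).intervalIntegrable a b)]
        simp_rw [hsplit]

theorem stmt9 (m n : ℕ) (hlt : n < m) (hev : Even (m - n)) (a : ℕ) (ha : Even a)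
    (hle : a ≤ m + n - 2) :
    ∫ x in (0:ℝ)..1, ∫ y in (0:ℝ)..x,
        (x - y) ^ a * shiftedLegendre m x * shiftedLegendre n y = 0 := by
  have hmn : Even (m + n) := Nat.even_add.mpr ((Nat.even_sub hlt.le).mp hev)
  have hsquare := integral_integral_sub_pow_mul_mul_eq_zero (a := 0) (b := 1) (d := a)
    (continuous_shiftedLegendre m) (continuous_shiftedLegendre n)
    (fun _ hj => integral_pow_mul_shiftedLegendre_eq_zero hj)
    (fun _ hj => integral_pow_mul_shiftedLegendre_eq_zero hj) (by omega)
  have hsign : (-1 : ℝ) ^ m * (-1) ^ n = 1 := by rw [← pow_add, hmn.neg_one_pow]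
  have hreflect : ∀ x y : ℝ,
      (0 + 1 - x - (0 + 1 - y)) ^ a * shiftedLegendre m (0 + 1 - x) * shiftedLegendre n (0 + 1 - y)
        = (x - y) ^ a * shiftedLegendre m x * shiftedLegendre n y := by
    intro x y
    rw [zero_add, shiftedLegendre_one_sub, shiftedLegendre_one_sub,
      show 1 - x - (1 - y) = -(x - y) by ring, ha.neg_pow]
    linear_combination (x - y) ^ a * shiftedLegendre m x * shiftedLegendre n y * hsign
  have htriangle := two_mul_integral_triangle_eq_integral_square
    (F := fun x y => (x - y) ^ a * shiftedLegendre m x * shiftedLegendre n y) (by fun_prop) hreflect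
  simpa using htriangle.trans hsquare
end

section
/- (Terminating case of Whipple's summation formula.) Let n be a natural number and let b, c be complex numbers such that b and c are not elements of {0, −1, −2, …, −(n−1)}. Then Σ_{k=0}^{n} [ (−n)_k (n+1)_k ((b+c−1)/2)_k / ( k! (b)_k (c)_k ) ] = 4ⁿ · ((b−n)/2)_n ((c−n)/2)_n / ( (b)_n (c)_n ). -/
/-!
Write `t_k(n; b, c)` for the summand and `S(n; b, c)` for the sum. By the WZ method the terms
satisfy `b c t_k(n+1; b, c) - (b-n-1)(c-n-1) t_k(n; b+1, c+1) = G_{k+1} - G_k`, where the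
certificate `G_{j+1}` is `(n+1)(b+c+j-n-1)` times the `j`-th term of
`₃F₂(-n, n+2, (b+c+1)/2; b+1, c+1; 1)` and `G_0 = G_{n+2} = 0`. Summing over `k` gives
`b c S(n+1; b, c) = (b-n-1)(c-n-1) S(n; b+1, c+1)`. The right-hand side obeys the same
recursion, so induction on `n`, shifting `b` and `c` by one at each step, proves the formula.
-/

/-- Pochhammer symbol `(a)_k = a(a+1)⋯(a+k-1)` for complex `a`. -/
noncomputable def pochC (a : ℂ) (k : ℕ) : ℂ := ∏ i ∈ Finset.range k, (a + i)

open Finset Nat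

@[simp]
lemma pochC_zero (a : ℂ) : pochC a 0 = 1 := prod_range_zero _

lemma pochC_succ_right (a : ℂ) (k : ℕ) : pochC a (k + 1) = pochC a k * (a + k) :=
  prod_range_succ _ _

lemma pochC_succ_left (a : ℂ) (k : ℕ) : pochC a (k + 1) = a * pochC (a + 1) k := by
  rw [pochC, prod_range_succ', pochC, mul_comm]
  push_cast
  simp only [add_zero, add_assoc, add_comm (1 : ℂ)]

lemma pochC_neg_natCast_eq_zero {n k : ℕ} (h : n < k) : pochC (-n) k = 0 :=
  prod_eq_zero (mem_range.mpr h) (neg_add_cancel _)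

noncomputable def hyper3F2Term (a₁ a₂ a₃ b₁ b₂ : ℂ) (k : ℕ) : ℂ :=
  pochC a₁ k * pochC a₂ k * pochC a₃ k / (k ! * pochC b₁ k * pochC b₂ k)

lemma hyper3F2Term_succ (a₁ a₂ a₃ b₁ b₂ : ℂ) (k : ℕ) :
    hyper3F2Term a₁ a₂ a₃ b₁ b₂ (k + 1) = hyper3F2Term a₁ a₂ a₃ b₁ b₂ k *
      ((a₁ + k) * (a₂ + k) * (a₃ + k) / ((k + 1) * (b₁ + k) * (b₂ + k))) := by
  simp only [hyper3F2Term, pochC_succ_right, factorial_succ]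
  push_cast
  simp only [div_eq_mul_inv, mul_inv]
  ring

noncomputable def whippleTerm (n : ℕ) (b c : ℂ) (k : ℕ) : ℂ :=
  hyper3F2Term (-n) (n + 1) ((b + c - 1) / 2) b c k

noncomputable def whippleRHS (n : ℕ) (b c : ℂ) : ℂ :=
  4 ^ n * pochC ((b - n) / 2) n * pochC ((c - n) / 2) n / (pochC b n * pochC c n)

lemma whippleTerm_eq_zero_of_lt {n k : ℕ} (b c : ℂ) (h : n < k) : whippleTerm n b c k = 0 := by
  simp [whippleTerm, hyper3F2Term, pochC_neg_natCast_eq_zero h]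

lemma whippleRHS_succ (n : ℕ) (b c : ℂ) :
    whippleRHS (n + 1) b c =
      (b - (n + 1)) * (c - (n + 1)) / (b * c) * whippleRHS n (b + 1) (c + 1) := by
  simp only [whippleRHS, pochC_succ_left]
  push_cast
  ring_nf

namespace Whipple

variable (n : ℕ) (b c : ℂ)

noncomputable def base (j : ℕ) : ℂ :=
  hyper3F2Term (-n) (n + 2) ((b + c + 1) / 2) (b + 1) (c + 1) j

noncomputable def cert : ℕ → ℂ
  | 0 => 0
  | j + 1 => (n + 1) * (b + c + j - n - 1) * base n b c j

lemma whippleTerm_succ_succ (j : ℕ) :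
    whippleTerm (n + 1) b c (j + 1) =
      -((n + 1) * (n + 2 + j) * ((b + c - 1) / 2)) / ((j + 1) * b * c) * base n b c j := by
  simp only [whippleTerm, base, hyper3F2Term, factorial_succ]
  rw [pochC_succ_left (-_), pochC_succ_right, pochC_succ_left ((b + c - 1) / 2),
    pochC_succ_left b, pochC_succ_left c]
  push_cast
  simp only [div_eq_mul_inv, mul_inv]
  ring_nf

lemma whippleTerm_add_one_succ (j : ℕ) :
    whippleTerm n (b + 1) (c + 1) (j + 1) =
      (n + 1) * ((b + c + 1) / 2 + j) * (j - n) / ((j + 1) * (b + 1 + j) * (c + 1 + j)) *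
        base n b c j := by
  simp only [whippleTerm, base, hyper3F2Term, factorial_succ]
  rw [pochC_succ_right (-_), pochC_succ_left (_ + 1), pochC_succ_right, pochC_succ_right (b + 1),
    pochC_succ_right (c + 1)]
  push_cast
  simp only [div_eq_mul_inv, mul_inv]
  ring_nf

lemma base_succ_self : base n b c (n + 1) = 0 := by
  simp [base, hyper3F2Term, pochC_neg_natCast_eq_zero (lt_add_one n)]

lemma base_succ (j : ℕ) :
    base n b c (j + 1) = base n b c j *
      ((-n + j) * (n + 2 + j) * ((b + c + 1) / 2 + j) / ((j + 1) * (b + 1 + j) * (c + 1 + j))) :=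
  hyper3F2Term_succ ..

lemma wz_pair (hb : ∀ k < n + 1, b ≠ -k) (hc : ∀ k < n + 1, c ≠ -k) {k : ℕ}
    (hk : k ≤ n + 1) :
    b * c * whippleTerm (n + 1) b c k -
        (b - (n + 1)) * (c - (n + 1)) * whippleTerm n (b + 1) (c + 1) k =
      cert n b c (k + 1) - cert n b c k := by
  have hb₀ : b ≠ 0 := by simpa using hb 0 n.succ_pos
  have hc₀ : c ≠ 0 := by simpa using hc 0 n.succ_pos
  rcases k with _ | j
  · simp [whippleTerm, hyper3F2Term, cert, base]
    ring
  have hj : (j + 1 : ℂ) * (j + 1 : ℂ)⁻¹ = 1 :=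
    mul_inv_cancel₀ (by exact_mod_cast j.succ_ne_zero)
  -- for `j = n` the denominator may vanish, but then so does the numerator
  have hρ : (j - n : ℂ) / ((b + 1 + j) * (c + 1 + j)) * ((b + 1 + j) * (c + 1 + j)) = j - n := by
    refine div_mul_cancel_of_imp fun h => ?_
    have hjn : j = n := by
      by_contra hjn
      rcases mul_eq_zero.mp h with h | h
      · exact hb (j + 1) (by omega) (by push_cast; linear_combination h)
      · exact hc (j + 1) (by omega) (by push_cast; linear_combination h)
    simp [hjn]
  simp only [cert]
  rw [whippleTerm_succ_succ, whippleTerm_add_one_succ, base_succ]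
  push_cast
  set X := base n b c j
  set e := -((n + 1) * (n + 2 + j) * ((b + c - 1) / 2)) * (j + 1 : ℂ)⁻¹ * X
  simp only [div_eq_mul_inv, mul_inv] at hρ ⊢
  -- `(b-n-1)(c-n-1) + (b+c+j-n)(n+2+j) = (b+1+j)(c+1+j)` lets `hρ` clear the denominators
  linear_combination e * c * c⁻¹ * mul_inv_cancel₀ hb₀ + e * mul_inv_cancel₀ hc₀
    - (n + 1) * ((b + c + 1) / 2 + j) * (j + 1 : ℂ)⁻¹ * X * hρ
    + (n + 1) * X * (n + 1 - b - c - j) * hj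

lemma cert_add_two : cert n b c (n + 2) = 0 := by
  simp [cert, base_succ_self]

end Whipple

open Whipple in
lemma sum_whippleTerm_succ {n : ℕ} {b c : ℂ} (hb : ∀ k < n + 1, b ≠ -k)
    (hc : ∀ k < n + 1, c ≠ -k) :
    b * c * ∑ k ∈ range (n + 2), whippleTerm (n + 1) b c k =
      (b - (n + 1)) * (c - (n + 1)) * ∑ k ∈ range (n + 1), whippleTerm n (b + 1) (c + 1) k := by
  have htel : ∑ k ∈ range (n + 2), (cert n b c (k + 1) - cert n b c k) = 0 := by
    rw [sum_range_sub, cert_add_two, cert, sub_zero]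
  have hext : ∑ k ∈ range (n + 2), whippleTerm n (b + 1) (c + 1) k =
      ∑ k ∈ range (n + 1), whippleTerm n (b + 1) (c + 1) k := by
    rw [sum_range_succ, whippleTerm_eq_zero_of_lt _ _ (lt_add_one n), add_zero]
  rw [← sub_eq_zero, ← hext, mul_sum, mul_sum, ← sum_sub_distrib, ← htel]
  exact sum_congr rfl fun k hk => wz_pair n b c hb hc (by simp at hk; omega)

theorem sum_whippleTerm {n : ℕ} {b c : ℂ} (hb : ∀ k < n, b ≠ -k)
    (hc : ∀ k < n, c ≠ -k) :
    ∑ k ∈ range (n + 1), whippleTerm n b c k = whippleRHS n b c := by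
  induction n generalizing b c with
  | zero => simp [whippleTerm, whippleRHS, hyper3F2Term]
  | succ n ih =>
    have hbc : b * c ≠ 0 :=
      mul_ne_zero (by simpa using hb 0 n.succ_pos) (by simpa using hc 0 n.succ_pos)
    have hb' : ∀ k < n, b + 1 ≠ -k :=
      fun k hk h => hb (k + 1) (by omega) (by push_cast; linear_combination h)
    have hc' : ∀ k < n, c + 1 ≠ -k :=
      fun k hk h => hc (k + 1) (by omega) (by push_cast; linear_combination h)
    apply mul_left_cancel₀ hbc
    rw [sum_whippleTerm_succ hb hc, ih hb' hc', whippleRHS_succ, ← mul_assoc,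
      mul_div_cancel₀ _ hbc]

theorem stmt10 (n : ℕ) (b c : ℂ)
    (hb : ∀ k : ℕ, k < n → b ≠ -(k : ℂ)) (hc : ∀ k : ℕ, k < n → c ≠ -(k : ℂ)) :
    ∑ k ∈ Finset.range (n + 1),
        pochC (-(n : ℂ)) k * pochC ((n : ℂ) + 1) k * pochC ((b + c - 1) / 2) k /
          ((Nat.factorial k : ℂ) * pochC b k * pochC c k) =
      4 ^ n * pochC ((b - n) / 2) n * pochC ((c - n) / 2) n / (pochC b n * pochC c n) :=
  sum_whippleTerm hb hc
end

section
/- For every natural number n ≥ 1, ∫₀¹ p_n(x) ln x dx = (−1)^{n+1} / ( n(n+1) ). -/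
open MeasureTheory intervalIntegral

/-!
Expanding `xⁿ(x-1)ⁿ` binomially and differentiating `n` times gives
`p_n(x) = ∑ⱼ (-1)ⁿ⁻ʲ C(n,j) C(n+j,n) xʲ`, while `∫₀¹ xʲ ln x dx = -1/(j+1)²`. The absorption
identities rewrite `C(n,j) C(n+j,n) / (j+1)²` as `C(n+1,j+1) C(n+j,n-1) / (n(n+1))`; with
`m = j+1` the sum becomes the `(n+1)`-st forward difference at `0` of `m ↦ C(m+n-1, n-1)`,
which vanishes because this is a polynomial of degree `n-1`, minus its `m = 0` term.
-/

open Finset Real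
open scoped fwdDiff

theorem pow_mul_sub_one_pow_eq_sum {R : Type*} [CommRing R] (n : ℕ) (x : R) :
    x ^ n * (x - 1) ^ n =
      ∑ j ∈ range (n + 1), (-1) ^ (n - j) * (n.choose j : R) * x ^ (n + j) := by
  rw [sub_eq_add_neg, add_pow, mul_sum]
  refine sum_congr rfl fun j _ ↦ ?_
  ring

theorem shiftedLegendre_eq_sum (n : ℕ) (x : ℝ) :
    shiftedLegendre n x =
      ∑ j ∈ range (n + 1), (-1) ^ (n - j) * (n.choose j : ℝ) * ((n + j).choose n) * x ^ j := by
  have hexp : (fun t : ℝ ↦ t ^ n * (t - 1) ^ n) =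
      fun t ↦ ∑ j ∈ range (n + 1), (-1) ^ (n - j) * (n.choose j : ℝ) * t ^ (n + j) :=
    funext fun t ↦ pow_mul_sub_one_pow_eq_sum n t
  rw [shiftedLegendre, hexp, iteratedDeriv_fun_sum (fun j _ ↦ by fun_prop), mul_sum]
  refine sum_congr rfl fun j _ ↦ ?_
  rw [iteratedDeriv_const_mul_field, iteratedDeriv_pow, Nat.descFactorial_eq_factorial_mul_choose,
    Nat.add_sub_cancel_left]
  push_cast
  field_simp

theorem intervalIntegrable_pow_mul_log (k : ℕ) {a b : ℝ} :
    IntervalIntegrable (fun x ↦ x ^ k * log x) volume a b :=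
  intervalIntegrable_log'.continuousOn_mul (continuous_pow k).continuousOn

theorem integral_pow_mul_log (k : ℕ) :
    ∫ x in (0 : ℝ)..1, x ^ k * log x = -1 / ((k : ℝ) + 1) ^ 2 := by
  set F : ℝ → ℝ := fun x ↦ x ^ (k + 1) * log x / (k + 1) - x ^ (k + 1) / (k + 1) ^ 2
  -- `x * log x` is continuous on all of `ℝ` (as `log 0 = 0`), so no limit at `0` is needed.
  have hF_cont : Continuous F := by
    have hF : F = fun x ↦ x ^ k * (x * log x) / (k + 1) - x ^ (k + 1) / (k + 1) ^ 2 := by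
      ext x; ring
    rw [hF]
    fun_prop (disch := exact continuous_mul_log)
  have hF_deriv (x : ℝ) (hx : x ∈ Set.Ioo (0 : ℝ) 1) : HasDerivAt F (x ^ k * log x) x := by
    have hx0 : x ≠ 0 := hx.1.ne'
    have h : HasDerivAt F (((k + 1) * x ^ k * log x + x ^ (k + 1) * x⁻¹) / (k + 1)
        - (k + 1) * x ^ k / (k + 1) ^ 2) x := by
      have hpow : HasDerivAt (· ^ (k + 1)) ((k + 1 : ℝ) * x ^ k) x := by
        simpa using hasDerivAt_pow (k + 1) x
      exact ((hpow.mul (hasDerivAt_log hx0)).div_const _).sub (hpow.div_const _)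
    convert h using 1
    field_simp
    ring
  rw [integral_eq_sub_of_hasDerivAt_of_le zero_le_one hF_cont.continuousOn hF_deriv
    (intervalIntegrable_pow_mul_log k)]
  simp [F, neg_div]

theorem fwdDiff_iter_choose_add_self_eq_zero (r : ℕ) :
    Δ_[1] ^[r + 1] (fun m : ℕ ↦ ((m + r).choose r : ℤ)) = 0 := by
  induction r with
  | zero => ext m; simp [fwdDiff]
  | succ r ih =>
    have hΔ : Δ_[1] (fun m : ℕ ↦ ((m + (r + 1)).choose (r + 1) : ℤ)) =
        fun m ↦ (((m + 1) + r).choose r : ℤ) := by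
      ext m
      rw [fwdDiff, show m + 1 + (r + 1) = m + 1 + r + 1 by omega, Nat.choose_succ_succ',
        show m + (r + 1) = m + 1 + r by omega]
      push_cast
      ring
    ext m
    rw [Function.iterate_succ_apply, hΔ]
    exact (fwdDiff_iter_comp_add 1 (fun m : ℕ ↦ ((m + r).choose r : ℤ)) 1 (r + 1) m).trans
      (congrFun ih _)

theorem alternating_sum_range_choose_mul_choose_add_self {N r : ℕ} (h : r < N) :
    ∑ k ∈ range (N + 1), (-1 : ℤ) ^ (N - k) * N.choose k * (k + r).choose r = 0 := by
  obtain ⟨d, rfl⟩ := Nat.exists_eq_add_of_lt h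
  have hzero : Δ_[1] ^[d + (r + 1)] (fun m : ℕ ↦ ((m + r).choose r : ℤ)) 0 = 0 := by
    rw [Function.iterate_add_apply, fwdDiff_iter_choose_add_self_eq_zero]
    exact congrFun (Function.iterate_fixed (fwdDiff_const (1 : ℕ) (0 : ℤ)) d) 0
  rw [fwdDiff_iter_eq_sum_shift, show d + (r + 1) = r + d + 1 by omega] at hzero
  simpa using hzero

theorem choose_mul_choose_add_mul_eq {n : ℕ} (hn : 1 ≤ n) (j : ℕ) :
    n * (n + 1) * (n.choose j * (n + j).choose n) =
      (j + 1) ^ 2 * ((n + 1).choose (j + 1) * (n + j).choose (n - 1)) := by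
  have h₁ := Nat.add_one_mul_choose_eq n j
  have h₂ := Nat.choose_succ_right_eq (n + j) (n - 1)
  rw [Nat.sub_add_cancel hn, show n + j - (n - 1) = j + 1 by omega] at h₂
  calc n * (n + 1) * (n.choose j * (n + j).choose n)
      = ((n + 1) * n.choose j) * ((n + j).choose n * n) := by ring
    _ = ((n + 1).choose (j + 1) * (j + 1)) * ((n + j).choose (n - 1) * (j + 1)) := by rw [h₁, h₂]
    _ = _ := by ring

theorem alternating_sum_range_choose_succ_mul_choose_add {n : ℕ} (hn : 1 ≤ n) :
    ∑ j ∈ range (n + 1), (-1 : ℤ) ^ (n - j) * (n + 1).choose (j + 1) * (n + j).choose (n - 1) =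
      (-1) ^ n := by
  have h := alternating_sum_range_choose_mul_choose_add_self (N := n + 1) (r := n - 1) (by omega)
  rw [sum_range_succ'] at h
  have hj (j : ℕ) : j + 1 + (n - 1) = n + j := by omega
  simp only [hj, Nat.add_sub_add_right, Nat.sub_zero, pow_succ, Nat.choose_zero_right, zero_add,
    Nat.choose_self, Nat.cast_one, mul_one] at h
  linear_combination h

theorem sum_range_neg_one_pow_mul_choose_mul_choose_div_sq {n : ℕ} (hn : 1 ≤ n) :
    ∑ j ∈ range (n + 1), (-1 : ℝ) ^ (n - j) * n.choose j * (n + j).choose n / ((j : ℝ) + 1) ^ 2 =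
      (-1 : ℝ) ^ n / ((n : ℝ) * (n + 1)) := by
  have hn₀ : (n : ℝ) ≠ 0 := by positivity
  have hterm (j : ℕ) : (-1 : ℝ) ^ (n - j) * n.choose j * (n + j).choose n / ((j : ℝ) + 1) ^ 2 =
      (-1) ^ (n - j) * (n + 1).choose (j + 1) * (n + j).choose (n - 1) / (n * (n + 1)) := by
    have h : (n : ℝ) * (n + 1) * (n.choose j * (n + j).choose n) =
        (j + 1) ^ 2 * ((n + 1).choose (j + 1) * (n + j).choose (n - 1)) := by
      exact_mod_cast choose_mul_choose_add_mul_eq hn j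
    field_simp
    linear_combination h
  have h : ∑ j ∈ range (n + 1),
      (-1 : ℝ) ^ (n - j) * (n + 1).choose (j + 1) * (n + j).choose (n - 1) = (-1) ^ n := by
    exact_mod_cast alternating_sum_range_choose_succ_mul_choose_add hn
  rw [sum_congr rfl fun j _ ↦ hterm j, ← sum_div, h]

theorem stmt14 (n : ℕ) (hn : 1 ≤ n) :
    ∫ x in (0:ℝ)..1, shiftedLegendre n x * Real.log x =
      (-1 : ℝ) ^ (n + 1) / ((n : ℝ) * ((n : ℝ) + 1)) := by
  have hexpand : (fun x ↦ shiftedLegendre n x * log x) = fun x ↦ ∑ j ∈ range (n + 1),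
      (-1) ^ (n - j) * (n.choose j : ℝ) * ((n + j).choose n) * (x ^ j * log x) := by
    ext x
    rw [shiftedLegendre_eq_sum, sum_mul]
    exact sum_congr rfl fun j _ ↦ by ring
  rw [hexpand, integral_finsetSum fun j _ ↦ (intervalIntegrable_pow_mul_log j).const_mul _]
  simp only [intervalIntegral.integral_const_mul, integral_pow_mul_log]
  rw [pow_succ, mul_neg_one, neg_div, ← sum_range_neg_one_pow_mul_choose_mul_choose_div_sq hn,
    ← sum_neg_distrib]
  exact sum_congr rfl fun j _ ↦ by ring
end

section
/- Let m, n ≥ 1 be natural numbers and let r be any natural number. Then (n+1)·S(m,n,r) − (n−1)·S(m−1,n−1,r) = (m+1)·S(n,m,r) − (m−1)·S(n−1,m−1,r), where S(m,n,r) denotes the coefficient of x^{r+1} in the polynomial p_m(x)·q_{n+1}(x) and q_{n+1}(x) = ∫₀ˣ p_n(t) dt. -/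
open Polynomial

/-- The shifted Legendre polynomial `pₙ(x) = (1/n!) dⁿ/dxⁿ (xⁿ(x-1)ⁿ)`, as a polynomial. -/
noncomputable def shiftedLegendrePoly (n : ℕ) : Polynomial ℝ :=
  C ((Nat.factorial n : ℝ))⁻¹ * (derivative^[n] (X ^ n * (X - 1) ^ n))

/-- The integrated shifted Legendre polynomial `q_{n+1}(x) = ∫₀ˣ pₙ(t) dt`. -/
noncomputable def qPoly (n : ℕ) : Polynomial ℝ :=
  ∑ k ∈ Finset.range (n + 1), C ((shiftedLegendrePoly n).coeff k / ((k : ℝ) + 1)) * X ^ (k + 1)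

/-- `S m n r` is the coefficient of `x^(r+1)` in `p_m(x) * q_{n+1}(x)`. -/
noncomputable def S (m n r : ℕ) : ℝ := (shiftedLegendrePoly m * qPoly n).coeff (r + 1)

/-!
Write `pₙ = shiftedLegendrePoly n` and `Qₙ = qPoly n = ∫₀ˣ pₙ` (the paper's `q_{n+1}`). Leibniz's
rule applied to derivatives of `(X² - X)ⁿ⁺¹`, written either as `(X² - X) (X² - X)ⁿ` or through
`D (X² - X)ⁿ⁺¹ = (n + 1) (2X - 1) (X² - X)ⁿ`, gives the classical relations
`p'ₙ₊₁ = (2X - 1) p'ₙ + 2(n + 1) pₙ`, `(n + 1) pₙ₊₁ = (n + 1)(2X - 1) pₙ + 2(X² - X) p'ₙ`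
and Legendre's equation in the integrated form `n(n + 1) Qₙ = (X² - X) p'ₙ`.

The last relation turns every product `pₐ Q_b` of the identity into a multiple of
`(X² - X) pₐ p'_b`. With `m = k + 1` and `n = j + 1`, the identity multiplied by `m n` becomes
`(X² - X)` times the invariance of `(k + 1) pₖ p'ⱼ - (j + 1) pⱼ p'ₖ` under
`(k, j) ↦ (k + 1, j + 1)`, which follows from the first two relations because
`(2X - 1)² - 4(X² - X) = 1`. Comparing coefficients of `X^(r+1)` gives the theorem.
-/

namespace Polynomial

theorem eq_of_derivative_eq_of_coeff_zero_eq {R : Type*} [Ring R] [IsAddTorsionFree R]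
    {p q : R[X]} (h : derivative p = derivative q) (h0 : p.coeff 0 = q.coeff 0) : p = q := by
  have hC := eq_C_of_derivative_eq_zero (by rw [derivative_sub, h, sub_self] :
    derivative (p - q) = 0)
  rwa [coeff_sub, h0, sub_self, map_zero, sub_eq_zero] at hC

theorem iterate_derivative_succ_mul_of_derivative_derivative_eq_zero {R : Type*} [CommSemiring R]
    {p : R[X]} (hp : derivative (derivative p) = 0) (f : R[X]) (k : ℕ) :
    derivative^[k + 1] (p * f) =
      p * derivative^[k + 1] f + ((k : R[X]) + 1) * derivative p * derivative^[k] f := by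
  induction k with
  | zero => simp [derivative_mul, add_comm]
  | succ k ih =>
    rw [Function.iterate_succ_apply', ih, Function.iterate_succ_apply' _ (k + 1),
      Function.iterate_succ_apply' _ k]
    simp only [derivative_add, derivative_mul, hp, derivative_natCast, derivative_one]
    push_cast
    ring

section Leibniz

variable {R : Type*} [CommRing R]

theorem iterate_derivative_succ_two_mul_X_sub_one_mul (f : R[X]) (k : ℕ) :
    derivative^[k + 1] ((2 * X - 1) * f) =
      (2 * X - 1) * derivative^[k + 1] f + 2 * ((k : R[X]) + 1) * derivative^[k] f := by
  rw [iterate_derivative_succ_mul_of_derivative_derivative_eq_zero (by simp)]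
  simp only [derivative_sub, derivative_mul, derivative_X, derivative_one, derivative_ofNat]
  ring

theorem iterate_derivative_add_two_X_sq_sub_X_mul (f : R[X]) (k : ℕ) :
    derivative^[k + 2] ((X ^ 2 - X) * f) =
      (X ^ 2 - X) * derivative^[k + 2] f
        + ((k : R[X]) + 2) * (2 * X - 1) * derivative^[k + 1] f
        + ((k : R[X]) + 2) * ((k : R[X]) + 1) * derivative^[k] f := by
  have hX : derivative (derivative (X : R[X])) = 0 := by simp
  have hX1 : derivative (derivative (X - 1 : R[X])) = 0 := by simp
  rw [show (X ^ 2 - X : R[X]) * f = X * ((X - 1) * f) by ring,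
    iterate_derivative_succ_mul_of_derivative_derivative_eq_zero hX,
    iterate_derivative_succ_mul_of_derivative_derivative_eq_zero hX1,
    iterate_derivative_succ_mul_of_derivative_derivative_eq_zero hX1]
  simp only [derivative_X, derivative_sub, derivative_one]
  push_cast
  ring

end Leibniz

end Polynomial

noncomputable def rodriguesPoly (n : ℕ) : ℝ[X] := X ^ n * (X - 1) ^ n

theorem rodriguesPoly_succ (n : ℕ) : rodriguesPoly (n + 1) = (X ^ 2 - X) * rodriguesPoly n := by
  rw [rodriguesPoly, rodriguesPoly]
  ring

theorem derivative_rodriguesPoly_succ (n : ℕ) :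
    derivative (rodriguesPoly (n + 1)) =
      ((n + 1 : ℕ) : ℝ[X]) * ((2 * X - 1) * rodriguesPoly n) := by
  simp only [rodriguesPoly, derivative_mul, derivative_pow, derivative_sub, derivative_X,
    derivative_one]
  push_cast
  simp only [map_add, map_natCast, map_one]
  ring

theorem iterate_derivative_rodriguesPoly_succ (n k : ℕ) :
    derivative^[k + 1] (rodriguesPoly (n + 1)) =
      ((n : ℝ[X]) + 1) * derivative^[k] ((2 * X - 1) * rodriguesPoly n) := by
  rw [Function.iterate_succ_apply, derivative_rodriguesPoly_succ, iterate_derivative_natCast_mul]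
  push_cast
  ring

/-- Both sides come from expanding `Dⁿ⁺² (X² - X)ⁿ⁺²`, once as `Dⁿ⁺² ((X² - X) (X² - X)ⁿ⁺¹)` and
once as `Dⁿ⁺¹ ((n + 2) (2X - 1) (X² - X)ⁿ⁺¹)`. -/
theorem X_sq_sub_X_mul_iterate_derivative_rodriguesPoly_succ (n : ℕ) :
    (X ^ 2 - X) * derivative^[n + 2] (rodriguesPoly (n + 1)) =
      (((n + 1) * (n + 2) : ℕ) : ℝ[X]) * derivative^[n] (rodriguesPoly (n + 1)) := by
  have hquad := iterate_derivative_add_two_X_sq_sub_X_mul (rodriguesPoly (n + 1)) n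
  have hlin := iterate_derivative_rodriguesPoly_succ (n + 1) (n + 1)
  rw [← rodriguesPoly_succ] at hquad
  rw [iterate_derivative_succ_two_mul_X_sub_one_mul] at hlin
  push_cast at hlin ⊢
  linear_combination hlin - hquad

theorem factorial_mul_shiftedLegendrePoly (n : ℕ) :
    (n.factorial : ℝ[X]) * shiftedLegendrePoly n = derivative^[n] (rodriguesPoly n) := by
  rw [shiftedLegendrePoly, ← mul_assoc, ← map_natCast C, ← C_mul,
    mul_inv_cancel₀ (by positivity), C_1, one_mul, rodriguesPoly]

theorem factorial_mul_derivative_shiftedLegendrePoly (n : ℕ) :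
    (n.factorial : ℝ[X]) * derivative (shiftedLegendrePoly n) =
      derivative^[n + 1] (rodriguesPoly n) := by
  rw [← derivative_natCast_mul, factorial_mul_shiftedLegendrePoly, Function.iterate_succ_apply']

theorem shiftedLegendrePoly_zero : shiftedLegendrePoly 0 = 1 := by
  simp [shiftedLegendrePoly]

theorem shiftedLegendrePoly_one : shiftedLegendrePoly 1 = 2 * X - 1 := by
  simp only [shiftedLegendrePoly, Nat.factorial_one, Nat.cast_one, inv_one, map_one, pow_one,
    Function.iterate_one, derivative_mul, derivative_X, one_mul, derivative_sub, derivative_one,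
    sub_zero, mul_one]
  ring

theorem derivative_shiftedLegendrePoly_succ (n : ℕ) :
    derivative (shiftedLegendrePoly (n + 1)) =
      (2 * X - 1) * derivative (shiftedLegendrePoly n)
        + 2 * ((n : ℝ[X]) + 1) * shiftedLegendrePoly n := by
  have h := factorial_mul_derivative_shiftedLegendrePoly (n + 1)
  rw [iterate_derivative_rodriguesPoly_succ, iterate_derivative_succ_two_mul_X_sub_one_mul,
    ← factorial_mul_shiftedLegendrePoly, ← factorial_mul_derivative_shiftedLegendrePoly,
    Nat.factorial_succ] at h
  refine mul_left_cancel₀ (?_ : ((n + 1).factorial : ℝ[X]) ≠ 0) ?_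
  · exact_mod_cast (n + 1).factorial_ne_zero
  rw [Nat.factorial_succ]
  push_cast at h ⊢
  linear_combination h

theorem succ_mul_shiftedLegendrePoly_succ (n : ℕ) :
    ((n : ℝ[X]) + 1) * shiftedLegendrePoly (n + 1) =
      ((n : ℝ[X]) + 1) * (2 * X - 1) * shiftedLegendrePoly n
        + 2 * (X ^ 2 - X) * derivative (shiftedLegendrePoly n) := by
  cases n with
  | zero => simp [shiftedLegendrePoly_zero, shiftedLegendrePoly_one]
  | succ n =>
    have h := factorial_mul_shiftedLegendrePoly (n + 2)
    rw [iterate_derivative_rodriguesPoly_succ, iterate_derivative_succ_two_mul_X_sub_one_mul,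
      ← factorial_mul_shiftedLegendrePoly, Nat.factorial_succ] at h
    have hw := X_sq_sub_X_mul_iterate_derivative_rodriguesPoly_succ n
    rw [← factorial_mul_derivative_shiftedLegendrePoly] at hw
    refine mul_left_cancel₀ (?_ : ((n + 1).factorial : ℝ[X]) ≠ 0) ?_
    · exact_mod_cast (n + 1).factorial_ne_zero
    push_cast at h hw ⊢
    linear_combination h - 2 * hw

theorem natDegree_shiftedLegendrePoly_le (n : ℕ) : (shiftedLegendrePoly n).natDegree ≤ n := by
  have hR : (X ^ n * (X - 1) ^ n : ℝ[X]).natDegree ≤ n + n := by compute_degree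
  refine (natDegree_C_mul_le _ _).trans ((natDegree_iterate_derivative _ _).trans ?_)
  omega

theorem derivative_qPoly (n : ℕ) : derivative (qPoly n) = shiftedLegendrePoly n := by
  conv_rhs => rw [(shiftedLegendrePoly n).as_sum_range' (n + 1)
    (Nat.lt_succ_of_le (natDegree_shiftedLegendrePoly_le n))]
  rw [qPoly, derivative_sum]
  refine Finset.sum_congr rfl fun k _ => ?_
  rw [derivative_C_mul, derivative_X_pow, ← mul_assoc, ← C_mul, Nat.cast_add, Nat.cast_one,
    div_mul_cancel₀ _ (by positivity), Nat.add_sub_cancel, C_mul_X_pow_eq_monomial]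

theorem coeff_zero_qPoly (n : ℕ) : (qPoly n).coeff 0 = 0 := by
  simp [qPoly, coeff_X_pow]

theorem mul_succ_mul_qPoly (n : ℕ) :
    ((n * (n + 1) : ℕ) : ℝ[X]) * qPoly n = (X ^ 2 - X) * derivative (shiftedLegendrePoly n) := by
  cases n with
  | zero => simp [shiftedLegendrePoly_zero]
  | succ n =>
    refine eq_of_derivative_eq_of_coeff_zero_eq ?_ (by simp [mul_coeff_zero, coeff_zero_qPoly])
    rw [derivative_natCast_mul, derivative_qPoly]
    refine mul_left_cancel₀ (?_ : ((n + 1).factorial : ℝ[X]) ≠ 0) ?_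
    · exact_mod_cast (n + 1).factorial_ne_zero
    calc ((n + 1).factorial : ℝ[X]) * (((n + 1) * (n + 1 + 1) : ℕ) * shiftedLegendrePoly (n + 1))
        = (((n + 1) * (n + 2) : ℕ) : ℝ[X]) * derivative^[n + 1] (rodriguesPoly (n + 1)) := by
          rw [← factorial_mul_shiftedLegendrePoly]
          ring
      _ = derivative ((X ^ 2 - X) * derivative^[n + 2] (rodriguesPoly (n + 1))) := by
          rw [X_sq_sub_X_mul_iterate_derivative_rodriguesPoly_succ, derivative_natCast_mul,
            Function.iterate_succ_apply']
      _ = ((n + 1).factorial : ℝ[X]) *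
            derivative ((X ^ 2 - X) * derivative (shiftedLegendrePoly (n + 1))) := by
          rw [← factorial_mul_derivative_shiftedLegendrePoly, mul_left_comm,
            derivative_natCast_mul]

theorem shiftedLegendrePoly_cross_succ_succ (k j : ℕ) :
    ((k : ℝ[X]) + 1) * shiftedLegendrePoly (k + 1) * derivative (shiftedLegendrePoly (j + 1))
        - ((j : ℝ[X]) + 1) * shiftedLegendrePoly (j + 1)
          * derivative (shiftedLegendrePoly (k + 1)) =
      ((k : ℝ[X]) + 1) * shiftedLegendrePoly k * derivative (shiftedLegendrePoly j)
        - ((j : ℝ[X]) + 1) * shiftedLegendrePoly j * derivative (shiftedLegendrePoly k) := by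
  have hk := succ_mul_shiftedLegendrePoly_succ k
  have hj := succ_mul_shiftedLegendrePoly_succ j
  have hk' := derivative_shiftedLegendrePoly_succ k
  have hj' := derivative_shiftedLegendrePoly_succ j
  linear_combination derivative (shiftedLegendrePoly (j + 1)) * hk
    - derivative (shiftedLegendrePoly (k + 1)) * hj
    + (((k : ℝ[X]) + 1) * (2 * X - 1) * shiftedLegendrePoly k
        + 2 * (X ^ 2 - X) * derivative (shiftedLegendrePoly k)) * hj'
    - (((j : ℝ[X]) + 1) * (2 * X - 1) * shiftedLegendrePoly j
        + 2 * (X ^ 2 - X) * derivative (shiftedLegendrePoly j)) * hk'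

theorem shiftedLegendrePoly_mul_qPoly_symm (k j : ℕ) :
    ((j + 2 : ℕ) : ℝ[X]) * (shiftedLegendrePoly (k + 1) * qPoly (j + 1))
        - (j : ℝ[X]) * (shiftedLegendrePoly k * qPoly j) =
      ((k + 2 : ℕ) : ℝ[X]) * (shiftedLegendrePoly (j + 1) * qPoly (k + 1))
        - (k : ℝ[X]) * (shiftedLegendrePoly j * qPoly k) := by
  have hj₁ := mul_succ_mul_qPoly (j + 1)
  have hj₀ := mul_succ_mul_qPoly j
  have hk₁ := mul_succ_mul_qPoly (k + 1)
  have hk₀ := mul_succ_mul_qPoly k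
  have hcross := shiftedLegendrePoly_cross_succ_succ k j
  refine mul_left_cancel₀ (?_ : (((k + 1) * (j + 1) : ℕ) : ℝ[X]) ≠ 0) ?_
  · exact_mod_cast Nat.mul_ne_zero k.succ_ne_zero j.succ_ne_zero
  push_cast at hj₁ hj₀ hk₁ hk₀ ⊢
  linear_combination ((k : ℝ[X]) + 1) * shiftedLegendrePoly (k + 1) * hj₁
    - ((k : ℝ[X]) + 1) * shiftedLegendrePoly k * hj₀
    - ((j : ℝ[X]) + 1) * shiftedLegendrePoly (j + 1) * hk₁
    + ((j : ℝ[X]) + 1) * shiftedLegendrePoly j * hk₀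
    + (X ^ 2 - X) * hcross

theorem stmt17 (m n : ℕ) (hm : 1 ≤ m) (hn : 1 ≤ n) (r : ℕ) :
    ((n : ℝ) + 1) * S m n r - ((n : ℝ) - 1) * S (m - 1) (n - 1) r =
      ((m : ℝ) + 1) * S n m r - ((m : ℝ) - 1) * S (n - 1) (m - 1) r := by
  obtain ⟨k, rfl⟩ : ∃ k, m = k + 1 := ⟨m - 1, by omega⟩
  obtain ⟨j, rfl⟩ : ∃ j, n = j + 1 := ⟨n - 1, by omega⟩
  have h := congrArg (coeff · (r + 1)) (shiftedLegendrePoly_mul_qPoly_symm k j)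
  simp only [coeff_sub, coeff_natCast_mul] at h
  simp only [S, Nat.add_sub_cancel]
  push_cast at h ⊢
  linarith
end
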